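/- arXiv:1907.01948 — 3 statements merged into one kernel-verified Lean document; each statement's English description precedes it below -/
import Mathlib

section
/- For ν ≥ 0, α ≥ 1, x > 0, and λ = ν + 1 + (α−1)/2, the ratio of modified Bessel functions of the first kind satisfies I_{ν+1}(x)/I_ν(x) > x/(λ + √(λ² + x²)). -/
/-- Modified Bessel function of the first kind of order ν. -/
noncomputable def besselI (ν : ℝ) (x : ℝ) : ℝ :=
  ∑' k : ℕ, (x / 2) ^ (ν + 2 * (k : ℝ)) / ((Nat.factorial k : ℝ) * Real.Gamma (ν + (k : ℝ) + 1))

/-!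
The recurrence `x I_ν = x I_{ν+2} + 2(ν+1) I_{ν+1}` together with the Turán inequality
`I_ν I_{ν+2} < I_{ν+1}²` gives `x I_ν² < x I_{ν+1}² + 2λ I_ν I_{ν+1}`, so `r = I_{ν+1}/I_ν`
satisfies `x r² + 2λr > x` and therefore exceeds the positive root `x / (λ + √(λ² + x²))` of
that quadratic.

For the Turán inequality write `I_ν(x) = (x/2)^ν S_ν((x/2)²)` with a power series `S_ν`. The Cauchy
product of `S_μ` and `S_ρ` has `n`-th coefficient
`Γ(μ+ρ+2n+1) / (n! Γ(μ+n+1) Γ(ρ+n+1) Γ(μ+ρ+n+1))`, so the coefficients of `S_ν S_{ν+2}` are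
`(ν+n+1)/(ν+n+2)` times those of `S_{ν+1}²`.
-/

open Real Finset Nat

noncomputable def besselCoeff (ν : ℝ) (k : ℕ) : ℝ := ((k ! : ℝ) * Gamma (ν + k + 1))⁻¹

noncomputable def besselSeries (ν y : ℝ) : ℝ := ∑' k : ℕ, besselCoeff ν k * y ^ k

section Coeff

variable {ν : ℝ}

lemma besselCoeff_pos (hν : 0 ≤ ν) (k : ℕ) : 0 < besselCoeff ν k := by
  have := Gamma_pos_of_pos (by positivity : 0 < ν + k + 1)
  unfold besselCoeff
  positivity

lemma besselCoeff_eq_mul_besselCoeff_add_one {k : ℕ} (h : ν + k + 1 ≠ 0) :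
    besselCoeff ν k = (ν + k + 1) * besselCoeff (ν + 1) k := by
  rw [besselCoeff, besselCoeff, show ν + 1 + k + 1 = ν + k + 1 + 1 by ring, Gamma_add_one h]
  field_simp

lemma succ_mul_besselCoeff_succ (ν : ℝ) (k : ℕ) :
    (k + 1) * besselCoeff ν (k + 1) = besselCoeff (ν + 1) k := by
  rw [besselCoeff, besselCoeff, factorial_succ]
  push_cast
  rw [show ν + (k + 1) + 1 = ν + 1 + k + 1 by ring]
  field_simp

lemma besselCoeff_le (hν : 0 ≤ ν) (k : ℕ) : besselCoeff ν k ≤ (Gamma (ν + 1))⁻¹ / k ! := by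
  have hΓ : Gamma (ν + 1) ≤ Gamma (ν + k + 1) := by
    induction k with
    | zero => simp
    | succ k ih =>
      have hpos : 0 < ν + k + 1 := by positivity
      rw [show ν + (k + 1 : ℕ) + 1 = ν + k + 1 + 1 by push_cast; ring, Gamma_add_one hpos.ne']
      nlinarith [Gamma_pos_of_pos hpos]
  have := Gamma_pos_of_pos (by positivity : 0 < ν + 1)
  rw [besselCoeff, mul_comm, mul_inv, ← div_eq_mul_inv]
  gcongr

end Coeff

section Series

variable {ν : ℝ}

lemma summable_besselCoeff_mul_pow (hν : 0 ≤ ν) (y : ℝ) :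
    Summable fun k => besselCoeff ν k * y ^ k := by
  refine .of_norm_bounded ((summable_pow_div_factorial |y|).mul_left (Gamma (ν + 1))⁻¹) fun k => ?_
  rw [norm_mul, norm_pow, norm_of_nonneg (besselCoeff_pos hν k).le, norm_eq_abs, mul_div_assoc',
    mul_div_right_comm]
  gcongr
  exact besselCoeff_le hν k

lemma besselSeries_pos (hν : 0 ≤ ν) {y : ℝ} (hy : 0 ≤ y) : 0 < besselSeries ν y :=
  (summable_besselCoeff_mul_pow hν y).tsum_pos
    (fun k => by have := besselCoeff_pos hν k; positivity) 0 (by simpa using besselCoeff_pos hν 0)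

lemma besselI_eq_rpow_mul_besselSeries (ν : ℝ) {x : ℝ} (hx : 0 < x) :
    besselI ν x = (x / 2) ^ ν * besselSeries ν ((x / 2) ^ 2) := by
  rw [besselI, besselSeries, ← tsum_mul_left]
  congr 1 with k
  rw [rpow_add (by positivity), show 2 * (k : ℝ) = ((2 * k : ℕ) : ℝ) by push_cast; ring,
    rpow_natCast, pow_mul, besselCoeff, div_eq_mul_inv]
  ring

lemma besselI_pos (hν : 0 ≤ ν) {x : ℝ} (hx : 0 < x) : 0 < besselI ν x := by
  rw [besselI_eq_rpow_mul_besselSeries ν hx]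
  exact mul_pos (by positivity) (besselSeries_pos hν (by positivity))

lemma besselSeries_eq (hν : 0 ≤ ν) (y : ℝ) :
    besselSeries ν y = (ν + 1) * besselSeries (ν + 1) y + y * besselSeries (ν + 2) y := by
  have hsum := summable_besselCoeff_mul_pow (ν := ν + 1) (by positivity) y
  have hcoeff (k : ℕ) :
      besselCoeff ν (k + 1) = (ν + 1) * besselCoeff (ν + 1) (k + 1) + besselCoeff (ν + 2) k := by
    have hshift := succ_mul_besselCoeff_succ (ν + 1) k
    rw [add_assoc, one_add_one_eq_two] at hshift
    rw [besselCoeff_eq_mul_besselCoeff_add_one (by positivity), ← hshift]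
    push_cast
    ring
  have htail : ∑' k, besselCoeff ν (k + 1) * y ^ (k + 1) =
      (ν + 1) * ∑' k, besselCoeff (ν + 1) (k + 1) * y ^ (k + 1) + y * besselSeries (ν + 2) y := by
    rw [besselSeries, ← tsum_mul_left, ← tsum_mul_left,
      ← (((summable_nat_add_iff 1).mpr hsum).mul_left _).tsum_add
        ((summable_besselCoeff_mul_pow (ν := ν + 2) (by positivity) y).mul_left _)]
    exact tsum_congr fun k => by rw [hcoeff]; ring
  unfold besselSeries at htail ⊢
  rw [(summable_besselCoeff_mul_pow hν y).tsum_eq_zero_add, htail, hsum.tsum_eq_zero_add,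
    besselCoeff_eq_mul_besselCoeff_add_one (by positivity : ν + (0 : ℕ) + 1 ≠ 0)]
  push_cast
  ring

end Series

section Product

variable {μ ρ ν : ℝ}

noncomputable def besselProdCoeff (μ ρ : ℝ) (n : ℕ) : ℝ :=
  ∑ p ∈ antidiagonal n, besselCoeff μ p.1 * besselCoeff ρ p.2

lemma besselSeries_mul_besselSeries (hμ : 0 ≤ μ) (hρ : 0 ≤ ρ) (y : ℝ) :
    HasSum (fun n => besselProdCoeff μ ρ n * y ^ n) (besselSeries μ y * besselSeries ρ y) := by
  have hμs := summable_besselCoeff_mul_pow hμ y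
  have hρs := summable_besselCoeff_mul_pow hρ y
  have hterm (n : ℕ) :
      ∑ p ∈ antidiagonal n, besselCoeff μ p.1 * y ^ p.1 * (besselCoeff ρ p.2 * y ^ p.2) =
        besselProdCoeff μ ρ n * y ^ n := by
    rw [besselProdCoeff, sum_mul]
    refine sum_congr rfl fun p hp => ?_
    rw [← mem_antidiagonal.mp hp, pow_add]
    ring
  have h := (summable_sum_mul_antidiagonal_of_summable_norm' hμs.norm hμs hρs.norm hρs).hasSum
  rw [← tsum_mul_tsum_eq_tsum_sum_antidiagonal_of_summable_norm hμs.norm hρs.norm] at h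
  simp only [hterm] at h
  exact h

lemma succ_mul_besselProdCoeff_succ (μ ρ : ℝ) (n : ℕ) :
    (n + 1) * besselProdCoeff μ ρ (n + 1) =
      besselProdCoeff (μ + 1) ρ n + besselProdCoeff μ (ρ + 1) n := by
  have hsplit : (n + 1) * besselProdCoeff μ ρ (n + 1) =
      ∑ p ∈ antidiagonal (n + 1), (p.1 : ℝ) * (besselCoeff μ p.1 * besselCoeff ρ p.2) +
      ∑ p ∈ antidiagonal (n + 1), (p.2 : ℝ) * (besselCoeff μ p.1 * besselCoeff ρ p.2) := by
    rw [besselProdCoeff, mul_sum, ← sum_add_distrib]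
    refine sum_congr rfl fun p hp => ?_
    rw [← add_mul, ← Nat.cast_add, mem_antidiagonal.mp hp]
    push_cast
    ring
  rw [hsplit, Nat.sum_antidiagonal_succ, Nat.sum_antidiagonal_succ']
  simp only [besselProdCoeff, Nat.cast_zero, zero_mul, zero_add, Nat.cast_add_one,
    ← succ_mul_besselCoeff_succ]
  congr 1 <;> exact sum_congr rfl fun p _ => by ring

lemma besselProdCoeff_eq (hμ : 0 ≤ μ) (hρ : 0 ≤ ρ) (n : ℕ) :
    besselProdCoeff μ ρ n = Gamma (μ + ρ + 2 * n + 1) /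
      (n ! * Gamma (μ + n + 1) * Gamma (ρ + n + 1) * Gamma (μ + ρ + n + 1)) := by
  induction n generalizing μ ρ with
  | zero =>
    have := Gamma_pos_of_pos (by positivity : 0 < μ + ρ + 1)
    rw [besselProdCoeff, antidiagonal_zero, sum_singleton, besselCoeff, besselCoeff]
    simp only [factorial_zero, cast_one, CharP.cast_eq_zero, mul_zero, add_zero, one_mul]
    field_simp
  | succ n ih =>
    have hrec := succ_mul_besselProdCoeff_succ μ ρ n
    rw [ih (by positivity) hρ, ih hμ (by positivity)] at hrec
    -- stated in the normal form that `ring_nf` gives the Gamma arguments below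
    have hE : Gamma (3 + μ + ρ + n * 2) = (2 + μ + ρ + n * 2) * Gamma (2 + μ + ρ + n * 2) := by
      rw [← Gamma_add_one (by positivity)]; ring_nf
    have hA : Gamma (2 + μ + n) = (1 + μ + n) * Gamma (1 + μ + n) := by
      rw [← Gamma_add_one (by positivity)]; ring_nf
    have hB : Gamma (2 + ρ + n) = (1 + ρ + n) * Gamma (1 + ρ + n) := by
      rw [← Gamma_add_one (by positivity)]; ring_nf
    have := Gamma_pos_of_pos (by positivity : 0 < 1 + μ + n)
    have := Gamma_pos_of_pos (by positivity : 0 < 1 + ρ + n)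
    have := Gamma_pos_of_pos (by positivity : 0 < 2 + μ + ρ + n)
    apply mul_left_cancel₀ (by positivity : (n + 1 : ℝ) ≠ 0)
    rw [hrec, factorial_succ]
    push_cast
    ring_nf
    rw [hE, hA, hB]
    field_simp
    ring

lemma besselProdCoeff_lt (hν : 0 ≤ ν) (n : ℕ) :
    besselProdCoeff ν (ν + 2) n < besselProdCoeff (ν + 1) (ν + 1) n := by
  rw [besselProdCoeff_eq hν (by positivity), besselProdCoeff_eq (by positivity) (by positivity)]
  have hG₁ : Gamma (ν + 1 + n + 1) = (ν + n + 1) * Gamma (ν + n + 1) := by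
    rw [add_right_comm ν, Gamma_add_one (by positivity)]
  have hG₂ : Gamma (ν + 2 + n + 1) = (ν + n + 2) * Gamma (ν + 1 + n + 1) := by
    rw [show ν + 2 + n + 1 = ν + 1 + n + 1 + 1 by ring, Gamma_add_one (by positivity)]
    ring
  rw [show ν + 1 + (ν + 1) = ν + (ν + 2) by ring, hG₂, hG₁]
  have := Gamma_pos_of_pos (by positivity : 0 < ν + (ν + 2) + 2 * n + 1)
  have := Gamma_pos_of_pos (by positivity : 0 < ν + (ν + 2) + n + 1)
  apply div_lt_div_of_pos_left (by positivity) (by positivity)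
  have hlt : (ν + n + 1) * (ν + n + 1) < (ν + n + 2) * (ν + n + 1) :=
    mul_lt_mul_of_pos_right (by linarith) (by positivity)
  have hc : 0 < (n ! : ℝ) * Gamma (ν + n + 1) ^ 2 * Gamma (ν + (ν + 2) + n + 1) := by positivity
  nlinarith [mul_lt_mul_of_pos_left hlt hc]

lemma besselSeries_mul_lt_sq (hν : 0 ≤ ν) {y : ℝ} (hy : 0 ≤ y) :
    besselSeries ν y * besselSeries (ν + 2) y < besselSeries (ν + 1) y ^ 2 := by
  rw [sq]
  exact hasSum_lt (i := 0)
    (fun n => mul_le_mul_of_nonneg_right (besselProdCoeff_lt hν n).le (pow_nonneg hy n))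
    (by simpa using besselProdCoeff_lt hν 0) (besselSeries_mul_besselSeries hν (by positivity) y)
    (besselSeries_mul_besselSeries (by positivity) (by positivity) y)

end Product

section BesselI

variable {ν x : ℝ}

lemma mul_besselI_eq (hν : 0 ≤ ν) (hx : 0 < x) :
    x * besselI ν x = x * besselI (ν + 2) x + 2 * (ν + 1) * besselI (ν + 1) x := by
  simp only [besselI_eq_rpow_mul_besselSeries _ hx]
  rw [rpow_add (by positivity), rpow_two, rpow_add_one (by positivity), besselSeries_eq hν]
  ring

lemma besselI_mul_besselI_add_two_lt_sq (hν : 0 ≤ ν) (hx : 0 < x) :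
    besselI ν x * besselI (ν + 2) x < besselI (ν + 1) x ^ 2 := by
  simp only [besselI_eq_rpow_mul_besselSeries _ hx]
  rw [rpow_add (by positivity), rpow_two, rpow_add_one (by positivity)]
  have hc : 0 < ((x / 2) ^ ν * (x / 2)) ^ 2 := by positivity
  have := mul_lt_mul_of_pos_left (besselSeries_mul_lt_sq hν (sq_nonneg (x / 2))) hc
  linear_combination this

end BesselI

lemma div_add_sqrt_sq_add_sq_lt {x l r : ℝ} (hx : 0 < x) (hr : 0 < r)
    (h : x < x * r ^ 2 + 2 * l * r) :
    x / (l + √(l ^ 2 + x ^ 2)) < r := by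
  set s := √(l ^ 2 + x ^ 2)
  have hs : s ^ 2 = l ^ 2 + x ^ 2 := sq_sqrt (by positivity)
  have hs₀ : 0 ≤ s := sqrt_nonneg _
  have hls : 0 < l + s := by nlinarith
  have hpos : 0 < x * r + l := by nlinarith
  have hslt : s < x * r + l := (sqrt_lt' hpos).2 (by nlinarith)
  rw [div_lt_iff₀ hls]
  nlinarith

theorem bessel_ratio_lower_bound (ν α x : ℝ) (hν : 0 ≤ ν) (hα : 1 ≤ α) (hx : 0 < x) :
    besselI (ν + 1) x / besselI ν x >
      x / ((ν + 1 + (α - 1) / 2) + Real.sqrt ((ν + 1 + (α - 1) / 2) ^ 2 + x ^ 2)) := by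
  set l := ν + 1 + (α - 1) / 2 with hl
  set A := besselI ν x
  set B := besselI (ν + 1) x
  have hA : 0 < A := besselI_pos hν hx
  have hB : 0 < B := besselI_pos (by positivity) hx
  have key : x * A ^ 2 < x * B ^ 2 + 2 * l * (A * B) :=
    calc x * A ^ 2 = x * (A * besselI (ν + 2) x) + 2 * (ν + 1) * (A * B) := by
          linear_combination A * mul_besselI_eq hν hx
      _ < x * B ^ 2 + 2 * (ν + 1) * (A * B) := by
          gcongr; exact besselI_mul_besselI_add_two_lt_sq hν hx
      _ ≤ x * B ^ 2 + 2 * l * (A * B) := by gcongr; linarith [hl]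
  refine div_add_sqrt_sq_add_sq_lt hx (div_pos hB hA) ?_
  calc x = x * A ^ 2 / A ^ 2 := by field_simp
    _ < (x * B ^ 2 + 2 * l * (A * B)) / A ^ 2 := by gcongr
    _ = x * (B / A) ^ 2 + 2 * l * (B / A) := by field_simp
end

section
/- Let ν ≥ 0, α ≥ 1. The function h₀(x) = x^{−α} · I_{ν+1}(x)/I_ν(x) is strictly decreasing on (0, ∞). -/
namespace H0Aux

open Real

noncomputable def c (μ : ℝ) (k : ℕ) : ℝ :=
  ((Nat.factorial k : ℝ) * Real.Gamma (μ + (k : ℝ) + 1))⁻¹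

lemma c_pos {μ : ℝ} (hμ : 0 ≤ μ) (k : ℕ) : 0 < c μ k := by
  have h1 : (0:ℝ) < (Nat.factorial k : ℝ) := by positivity
  have h2 : (0:ℝ) < Real.Gamma (μ + (k : ℝ) + 1) :=
    Real.Gamma_pos_of_pos (by positivity)
  exact inv_pos.mpr (mul_pos h1 h2)

lemma c_succ {μ : ℝ} (hμ : 0 ≤ μ) (k : ℕ) :
    c μ (k + 1) = c μ k * ((k + 1 : ℝ) * (μ + k + 1))⁻¹ := by
  have hpos : (0:ℝ) < μ + k + 1 := by positivity
  have hg : Real.Gamma (μ + ((k:ℕ)+1 : ℕ) + 1) = (μ + k + 1) * Real.Gamma (μ + k + 1) := by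
    have := Real.Gamma_add_one (ne_of_gt hpos)
    push_cast
    rw [show μ + ((k:ℝ)+1) + 1 = (μ + k + 1) + 1 by ring, this]
  unfold c
  rw [hg, Nat.factorial_succ]
  push_cast
  have h1 : (0:ℝ) < (Nat.factorial k : ℝ) := by positivity
  have h2 : (0:ℝ) < Real.Gamma (μ + (k : ℝ) + 1) :=
    Real.Gamma_pos_of_pos (by positivity)
  field_simp

lemma summable_c {μ : ℝ} (hμ : 0 ≤ μ) (t : ℝ) :
    Summable (fun k : ℕ => c μ k * t ^ k) := by
  apply summable_of_ratio_norm_eventually_le (r := 1/2) (by norm_num)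
  filter_upwards [Filter.eventually_ge_atTop ⌈2 * |t|⌉₊] with k hk
  have hk' : 2 * |t| ≤ (k : ℝ) := Nat.ceil_le.mp hk
  have hpos : (0:ℝ) < (k + 1 : ℝ) * (μ + k + 1) := by positivity
  have hrec : c μ (k + 1) * t ^ (k + 1) =
      (c μ k * t ^ k) * (t * ((k + 1 : ℝ) * (μ + k + 1))⁻¹) := by
    rw [c_succ hμ k, pow_succ]; ring
  rw [hrec, norm_mul]
  have h1 : ‖t * ((k + 1 : ℝ) * (μ + k + 1))⁻¹‖ ≤ 1/2 := by
    rw [norm_mul, norm_inv, Real.norm_eq_abs, Real.norm_eq_abs,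
      abs_of_pos hpos]
    rw [mul_inv_le_iff₀ hpos]
    have h2 : (k:ℝ) + 1 ≤ (k + 1 : ℝ) * (μ + k + 1) := by nlinarith [abs_nonneg t]
    nlinarith [abs_nonneg t]
  calc ‖c μ k * t ^ k‖ * ‖t * ((k + 1 : ℝ) * (μ + k + 1))⁻¹‖
      ≤ ‖c μ k * t ^ k‖ * (1/2) := by
        exact mul_le_mul_of_nonneg_left h1 (norm_nonneg _)
    _ = 1/2 * ‖c μ k * t ^ k‖ := by ring

noncomputable def A (μ t : ℝ) : ℝ := ∑' k : ℕ, c μ k * t ^ k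

lemma A_pos {μ : ℝ} (hμ : 0 ≤ μ) {t : ℝ} (ht : 0 ≤ t) : 0 < A μ t := by
  apply Summable.tsum_pos (summable_c hμ t) (fun k => mul_nonneg (c_pos hμ k).le (pow_nonneg ht k)) 0
  simpa using c_pos hμ 0

lemma A_nonneg {μ : ℝ} (hμ : 0 ≤ μ) {t : ℝ} (ht : 0 ≤ t) : 0 ≤ A μ t :=
  (A_pos hμ ht).le

lemma besselI_eq {μ x : ℝ} (hx : 0 < x) :
    besselI μ x = (x / 2) ^ μ * A μ (x ^ 2 / 4) := by
  unfold besselI A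
  rw [← tsum_mul_left]
  congr 1; funext k
  have hx2 : (0:ℝ) < x / 2 := by linarith
  have h1 : (x / 2) ^ (μ + 2 * (k : ℝ)) = (x / 2) ^ μ * (x ^ 2 / 4) ^ k := by
    rw [Real.rpow_add hx2]
    congr 1
    rw [show (2 : ℝ) * (k : ℝ) = ((2 * k : ℕ) : ℝ) by push_cast; ring,
      Real.rpow_natCast, pow_mul]
    congr 1; ring
  rw [h1, c]; field_simp

lemma c_rel {ν : ℝ} (hν : 0 ≤ ν) (k : ℕ) :
    c (ν + 1) k = c ν k * (ν + k + 1)⁻¹ := by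
  have hpos : (0:ℝ) < ν + k + 1 := by positivity
  unfold c
  rw [show ν + 1 + (k:ℝ) + 1 = (ν + k + 1) + 1 by ring,
    Real.Gamma_add_one (ne_of_gt hpos),
    show (Nat.factorial k : ℝ) * ((ν + k + 1) * Real.Gamma (ν + (k:ℝ) + 1)) =
      ((Nat.factorial k : ℝ) * Real.Gamma (ν + (k:ℝ) + 1)) * (ν + k + 1) by ring,
    mul_inv]

set_option maxHeartbeats 2000000 in
/-- The key cross inequality. -/
lemma cross {ν : ℝ} (hν : 0 ≤ ν) {s t : ℝ} (hs : 0 < s) (hst : s < t) :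
    A (ν + 1) t * A ν s < A (ν + 1) s * A ν t := by
  have hν1 : (0:ℝ) ≤ ν + 1 := by linarith
  have ht : 0 < t := hs.trans hst
  set a : ℕ → ℝ := c ν with ha
  set b : ℕ → ℝ := c (ν + 1) with hb
  -- summabilities
  have Sbs : Summable (fun k : ℕ => b k * s ^ k) := summable_c hν1 s
  have Sbt : Summable (fun k : ℕ => b k * t ^ k) := summable_c hν1 t
  have Sas : Summable (fun k : ℕ => a k * s ^ k) := summable_c hν s
  have Sat : Summable (fun k : ℕ => a k * t ^ k) := summable_c hν t
  have nb : ∀ u : ℝ, 0 ≤ u → ∀ k : ℕ, 0 ≤ b k * u ^ k :=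
    fun u hu k => mul_nonneg (c_pos hν1 k).le (pow_nonneg hu k)
  have na : ∀ u : ℝ, 0 ≤ u → ∀ k : ℕ, 0 ≤ a k * u ^ k :=
    fun u hu k => mul_nonneg (c_pos hν k).le (pow_nonneg hu k)
  have SX : Summable (fun p : ℕ × ℕ => (b p.1 * s ^ p.1) * (a p.2 * t ^ p.2)) :=
    Summable.mul_of_nonneg Sbs Sat (nb s hs.le) (na t ht.le)
  have SY : Summable (fun p : ℕ × ℕ => (b p.1 * t ^ p.1) * (a p.2 * s ^ p.2)) :=
    Summable.mul_of_nonneg Sbt Sas (nb t ht.le) (na s hs.le)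
  have eX : A (ν + 1) s * A ν t = ∑' p : ℕ × ℕ, (b p.1 * s ^ p.1) * (a p.2 * t ^ p.2) :=
    Summable.tsum_mul_tsum Sbs Sat SX
  have eY : A (ν + 1) t * A ν s = ∑' p : ℕ × ℕ, (b p.1 * t ^ p.1) * (a p.2 * s ^ p.2) :=
    Summable.tsum_mul_tsum Sbt Sas SY
  set F : ℕ × ℕ → ℝ :=
    fun p => (b p.1 * s ^ p.1) * (a p.2 * t ^ p.2) - (b p.1 * t ^ p.1) * (a p.2 * s ^ p.2)
    with hF
  have SF : Summable F := SX.sub SY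
  have hDeq : A (ν + 1) s * A ν t - A (ν + 1) t * A ν s = ∑' p, F p := by
    rw [eX, eY, (Summable.tsum_sub SX SY).symm]
  -- swap symmetrization
  have SFswap : Summable (fun p : ℕ × ℕ => F p.swap) :=
    (Equiv.prodComm ℕ ℕ).summable_iff.mpr SF
  have hswap : ∑' p : ℕ × ℕ, F p.swap = ∑' p, F p := (Equiv.prodComm ℕ ℕ).tsum_eq F
  set G : ℕ × ℕ → ℝ := fun p => F p + F p.swap with hG
  have SG : Summable G := SF.add SFswap
  have hGsum : ∑' p, G p = 2 * ∑' p, F p := by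
    rw [hG, Summable.tsum_add SF SFswap, hswap]; ring
  -- G is nonneg
  have hGform : ∀ k l : ℕ, G (k, l) =
      (b k * a l - a k * b l) * (s ^ k * t ^ l - t ^ k * s ^ l) := by
    intro k l
    simp only [hG, hF, Prod.swap]
    ring
  have key : ∀ k l : ℕ, k ≤ l →
      0 ≤ b k * a l - a k * b l ∧ 0 ≤ s ^ k * t ^ l - t ^ k * s ^ l := by
    intro k l hkl
    obtain ⟨m, rfl⟩ := Nat.exists_eq_add_of_le hkl
    constructor
    · rw [hb, ha, c_rel hν k, c_rel hν (k + m)]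
      have h1 : (0:ℝ) < ν + k + 1 := by positivity
      have h2 : ν + k + 1 ≤ ν + (k + m : ℕ) + 1 := by push_cast; linarith [Nat.cast_nonneg (α := ℝ) m]
      have h3 : (ν + (k + m : ℕ) + 1 : ℝ)⁻¹ ≤ (ν + k + 1)⁻¹ :=
        inv_anti₀ h1 h2
      have := mul_pos (c_pos hν k) (c_pos hν (k + m))
      nlinarith [c_pos hν k, c_pos hν (k+m)]
    · have h4 : s ^ m ≤ t ^ m := pow_le_pow_left₀ hs.le hst.le m
      have : s ^ k * t ^ (k + m) - t ^ k * s ^ (k + m) = (s * t) ^ k * (t ^ m - s ^ m) := by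
        rw [pow_add, pow_add, mul_pow]; ring
      rw [this]
      exact mul_nonneg (by positivity) (by linarith)
  have hGnonneg : ∀ p : ℕ × ℕ, 0 ≤ G p := by
    rintro ⟨k, l⟩
    rcases le_total k l with h | h
    · obtain ⟨h1, h2⟩ := key k l h
      rw [hGform k l]; exact mul_nonneg h1 h2
    · obtain ⟨h1, h2⟩ := key l k h
      rw [hGform k l]
      have : (b k * a l - a k * b l) * (s ^ k * t ^ l - t ^ k * s ^ l) =
          (b l * a k - a l * b k) * (s ^ l * t ^ k - t ^ l * s ^ k) := by ring
      rw [this]; exact mul_nonneg h1 h2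
  -- G (0,1) > 0
  have hG01 : 0 < G (0, 1) := by
    rw [hGform 0 1]
    apply mul_pos
    · rw [hb, ha, c_rel hν 0, c_rel hν 1]
      have h1 : (0:ℝ) < ν + (0:ℕ) + 1 := by positivity
      have h2 : (0:ℝ) < ν + (1:ℕ) + 1 := by positivity
      have h3 : (ν + (1:ℕ) + 1 : ℝ)⁻¹ < (ν + (0:ℕ) + 1)⁻¹ := by
        apply inv_strictAnti₀ h1
        push_cast; linarith
      nlinarith [mul_pos (mul_pos (c_pos hν 0) (c_pos hν 1)) (sub_pos.mpr h3)]
    · simp only [pow_zero, pow_one]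
      nlinarith
  have hGpos : 0 < ∑' p, G p := Summable.tsum_pos SG hGnonneg (0, 1) hG01
  have : 0 < ∑' p, F p := by linarith [hGsum ▸ hGpos]
  linarith [hDeq ▸ this]

end H0Aux

theorem h0_strictAnti (ν α : ℝ) (hν : 0 ≤ ν) (hα : 1 ≤ α) :
    StrictAntiOn (fun x : ℝ => x ^ (-α) * (besselI (ν + 1) x / besselI ν x)) (Set.Ioi 0) := by
  open H0Aux in
  intro x hx y hy hxy
  simp only [Set.mem_Ioi] at hx hy
  have hν1 : (0:ℝ) ≤ ν + 1 := by linarith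
  have hx2 : (0:ℝ) < x ^ 2 / 4 := by positivity
  have hy2 : (0:ℝ) < y ^ 2 / 4 := by positivity
  have hst : x ^ 2 / 4 < y ^ 2 / 4 := by nlinarith
  -- rewrite h0
  have hform : ∀ z : ℝ, 0 < z →
      z ^ (-α) * (besselI (ν + 1) z / besselI ν z) =
        z ^ (1 - α) * ((1/2) * (A (ν + 1) (z ^ 2 / 4) / A ν (z ^ 2 / 4))) := by
    intro z hz
    have hz2 : (0:ℝ) < z / 2 := by linarith
    have hAz : 0 < A ν (z ^ 2 / 4) := A_pos hν (by positivity)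
    have hzν : (0:ℝ) < (z/2) ^ ν := Real.rpow_pos_of_pos hz2 ν
    rw [besselI_eq hz, besselI_eq hz, Real.rpow_add hz2, Real.rpow_one,
      show z ^ (1-α) = z ^ (-α) * z by
        rw [show (1:ℝ) - α = -α + 1 by ring, Real.rpow_add hz, Real.rpow_one]]
    field_simp
  dsimp only
  rw [hform x hx, hform y hy]
  have hcross := H0Aux.cross hν hx2 hst
  have hAx : 0 < A ν (x ^ 2 / 4) := A_pos hν hx2.le
  have hAy : 0 < A ν (y ^ 2 / 4) := A_pos hν hy2.le
  have hBy : 0 ≤ A (ν + 1) (y ^ 2 / 4) := A_nonneg hν1 hy2.le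
  have hratio : A (ν+1) (y^2/4) / A ν (y^2/4) < A (ν+1) (x^2/4) / A ν (x^2/4) := by
    rw [div_lt_div_iff₀ hAy hAx]
    linarith [hcross]
  have hpow : y ^ (1 - α) ≤ x ^ (1 - α) :=
    Real.rpow_le_rpow_of_nonpos hx hxy.le (by linarith)
  have hxpow : 0 < x ^ (1 - α) := Real.rpow_pos_of_pos hx _
  apply mul_lt_mul' hpow
  · exact mul_lt_mul_of_pos_left hratio (by norm_num)
  · positivity
  · exact hxpow
end

section
/- For ν ≥ 0 and r > 0, the function σ ↦ σ · I_ν'(r/√σ) / I_ν(r/√σ) is strictly monotone (injective) on (0, ∞). In particular, if σ₁, σ₂ > 0 satisfy σ₁ I_ν'(r/√σ₁)/I_ν(r/√σ₁) = σ₂ I_ν'(r/√σ₂)/I_ν(r/√σ₂), then σ₁ = σ₂. -/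
/-!
Write `I_ν(x) = (x/2)^ν φ_ν(x²/4)` with the entire series `φ_ν(u) = ∑ uᵏ / (k! Γ(ν+k+1))`; then
`φ_ν' = φ_{ν+1}` and `φ_ν = u φ_{ν+2} + (ν+1) φ_{ν+1}`. Since `σ = r²/t²` for `t = r/√σ`, the map
is `r² G(r/√σ)` with `G(t) = I_ν'(t) / (t² I_ν(t)) = ν/t³ + φ_{ν+1}(u) / (2t φ_ν(u))`, `u = t²/4`,
so it suffices that `G` is strictly decreasing. Its derivative is
`-3ν/t⁴ - Q(u) / (2t² φ_ν(u)²)` with `Q = 2u φ_{ν+1}² + (2ν+3) φ_ν φ_{ν+1} - 2φ_ν²`, and `Q > 0` on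
`u > 0` because `u^(ν+3/2) Q(u)` vanishes at `0` and has the positive derivative
`u^(ν+1/2) (4u φ_{ν+1}² + (ν+3/2) φ_ν φ_{ν+1})`.
-/

open Real Set
open scoped Nat

theorem Real.Gamma_le_Gamma_add_nat {x : ℝ} (hx : 1 ≤ x) (k : ℕ) : Gamma x ≤ Gamma (x + k) := by
  induction k with
  | zero => simp
  | succ k ih =>
    have hxk : 1 ≤ x + k := by linarith [k.cast_nonneg (α := ℝ)]
    rw [Nat.cast_succ, ← add_assoc, Gamma_add_one (by linarith)]
    nlinarith [Gamma_pos_of_pos (by linarith : 0 < x + k)]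

noncomputable def besselICoeff (ν : ℝ) (k : ℕ) : ℝ := ((k ! : ℝ) * Gamma (ν + k + 1))⁻¹

noncomputable def besselIReduced (ν u : ℝ) : ℝ := ∑' k, besselICoeff ν k * u ^ k

section Coeff

variable {ν : ℝ}

lemma besselICoeff_pos (hν : -1 < ν) (k : ℕ) : 0 < besselICoeff ν k := by
  have := Gamma_pos_of_pos (by linarith [k.cast_nonneg (α := ℝ)] : 0 < ν + k + 1)
  unfold besselICoeff
  positivity

lemma besselICoeff_le (hν : 0 ≤ ν) (k : ℕ) :
    besselICoeff ν k ≤ (Gamma (ν + 1))⁻¹ * (k ! : ℝ)⁻¹ := by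
  rw [besselICoeff, mul_inv, mul_comm]
  have hΓ := Gamma_le_Gamma_add_nat (by linarith : 1 ≤ ν + 1) k
  rw [add_right_comm] at hΓ
  gcongr

lemma summable_besselICoeff_mul_pow (hν : 0 ≤ ν) (u : ℝ) :
    Summable fun k => besselICoeff ν k * u ^ k := by
  refine .of_norm_bounded ((summable_pow_div_factorial |u|).mul_left (Gamma (ν + 1))⁻¹) fun k => ?_
  rw [norm_mul, norm_pow, Real.norm_eq_abs, Real.norm_eq_abs,
    abs_of_pos (besselICoeff_pos (by linarith) k), div_eq_mul_inv, mul_comm (|u| ^ k), ← mul_assoc]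
  gcongr
  exact besselICoeff_le hν k

lemma succ_mul_besselICoeff_succ (ν : ℝ) (k : ℕ) :
    (k + 1) * besselICoeff ν (k + 1) = besselICoeff (ν + 1) k := by
  simp only [besselICoeff, Nat.factorial_succ, Nat.cast_mul, Nat.cast_succ]
  rw [show ν + (k + 1) + 1 = ν + 1 + k + 1 by ring]
  field_simp

lemma besselICoeff_zero (hν : -1 < ν) : besselICoeff ν 0 = (ν + 1) * besselICoeff (ν + 1) 0 := by
  simp only [besselICoeff, Nat.factorial_zero, Nat.cast_one, Nat.cast_zero, add_zero, one_mul]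
  have hν1 : 0 < ν + 1 := by linarith
  have := Gamma_pos_of_pos hν1
  rw [Gamma_add_one (s := ν + 1) hν1.ne']
  field_simp

lemma besselICoeff_succ (hν : -1 < ν) (k : ℕ) :
    besselICoeff ν (k + 1) = besselICoeff (ν + 2) k + (ν + 1) * besselICoeff (ν + 1) (k + 1) := by
  simp only [besselICoeff, Nat.factorial_succ, Nat.cast_mul, Nat.cast_succ]
  have hpos : 0 < ν + k + 2 := by linarith [k.cast_nonneg (α := ℝ)]
  rw [show ν + (k + 1) + 1 = ν + k + 2 by ring, show ν + 2 + k + 1 = ν + k + 2 + 1 by ring,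
    show ν + 1 + (k + 1) + 1 = ν + k + 2 + 1 by ring, Gamma_add_one hpos.ne']
  have := Gamma_pos_of_pos hpos
  field_simp
  ring

end Coeff

section Reduced

variable {ν : ℝ}

lemma hasDerivAt_besselIReduced (hν : 0 ≤ ν) (u : ℝ) :
    HasDerivAt (besselIReduced ν) (besselIReduced (ν + 1) u) u := by
  set R := |u| + 1
  have hshift : ∀ z : ℝ, ∀ k : ℕ, besselICoeff ν (k + 1) * ((k + 1 : ℝ) * z ^ k) =
      besselICoeff (ν + 1) k * z ^ k := fun z k => by
    rw [← succ_mul_besselICoeff_succ]; ring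
  have hsum' : ∀ z, Summable fun k => besselICoeff ν k * (k * z ^ (k - 1)) := fun z =>
    (summable_nat_add_iff 1).mp <| by
      simpa only [Nat.cast_succ, Nat.add_sub_cancel, hshift] using
        summable_besselICoeff_mul_pow (by linarith) z
  have hu : u ∈ Ioo (-R) R := ⟨by linarith [neg_abs_le u], by linarith [le_abs_self u]⟩
  have hbound : ∀ (k : ℕ), ∀ z ∈ Ioo (-R) R,
      ‖besselICoeff ν k * (k * z ^ (k - 1))‖ ≤ besselICoeff ν k * (k * R ^ (k - 1)) := by
    intro k z hz
    have := (besselICoeff_pos (ν := ν) (by linarith) k).le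
    rw [norm_mul, norm_mul, norm_pow, Real.norm_eq_abs, Real.norm_eq_abs, Real.norm_eq_abs,
      abs_of_nonneg this, Nat.abs_cast]
    gcongr
    exact (abs_lt.mpr hz).le
  have hderiv := hasDerivAt_tsum_of_isPreconnected (hsum' R) isOpen_Ioo isPreconnected_Ioo
    (fun k z _ => (hasDerivAt_pow k z).const_mul (besselICoeff ν k)) hbound hu
    (summable_besselICoeff_mul_pow hν u) hu
  have hvalue : ∑' k, besselICoeff ν k * (k * u ^ (k - 1)) = besselIReduced (ν + 1) u := by
    rw [(hsum' u).tsum_eq_zero_add]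
    simp [besselIReduced, hshift]
  exact hvalue ▸ hderiv

lemma besselIReduced_recurrence (hν : 0 ≤ ν) (u : ℝ) :
    besselIReduced ν u = u * besselIReduced (ν + 2) u + (ν + 1) * besselIReduced (ν + 1) u := by
  have hs₁ := (summable_nat_add_iff 1).mpr
    (summable_besselICoeff_mul_pow (ν := ν + 1) (by linarith) u)
  have hs₂ := summable_besselICoeff_mul_pow (ν := ν + 2) (by linarith) u
  have hterm : ∀ k : ℕ, besselICoeff ν (k + 1) * u ^ (k + 1) =
      u * (besselICoeff (ν + 2) k * u ^ k) +
        (ν + 1) * (besselICoeff (ν + 1) (k + 1) * u ^ (k + 1)) :=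
    fun k => by rw [besselICoeff_succ (by linarith)]; ring
  unfold besselIReduced
  rw [(summable_besselICoeff_mul_pow hν u).tsum_eq_zero_add,
    (summable_besselICoeff_mul_pow (ν := ν + 1) (by linarith) u).tsum_eq_zero_add, tsum_congr hterm,
    (hs₂.mul_left u).tsum_add (hs₁.mul_left (ν + 1)), tsum_mul_left, tsum_mul_left,
    besselICoeff_zero (by linarith)]
  ring

lemma besselIReduced_pos (hν : 0 ≤ ν) {u : ℝ} (hu : 0 ≤ u) : 0 < besselIReduced ν u :=
  (summable_besselICoeff_mul_pow hν u).tsum_pos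
    (fun k => mul_nonneg (besselICoeff_pos (by linarith) k).le (pow_nonneg hu k)) 0
    (by simpa using besselICoeff_pos (by linarith) 0)

end Reduced

section Bessel

variable {ν x : ℝ}

lemma besselI_eq_rpow_mul_besselIReduced (ν : ℝ) (hx : 0 < x) :
    besselI ν x = (x / 2) ^ ν * besselIReduced ν (x ^ 2 / 4) := by
  unfold besselI besselIReduced
  rw [← tsum_mul_left]
  congr 1 with k
  rw [rpow_add (by positivity), show 2 * (k : ℝ) = ((2 * k : ℕ) : ℝ) by push_cast; ring,
    rpow_natCast, pow_mul, besselICoeff]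
  ring

lemma hasDerivAt_besselI (hν : 0 ≤ ν) (hx : 0 < x) :
    HasDerivAt (besselI ν) ((x / 2) ^ ν *
      (ν / x * besselIReduced ν (x ^ 2 / 4) + x / 2 * besselIReduced (ν + 1) (x ^ 2 / 4))) x := by
  have hpow : HasDerivAt (fun y => (y / 2) ^ ν) (1 / 2 * ν * (x / 2) ^ (ν - 1)) x :=
    ((hasDerivAt_id' x).div_const 2).rpow_const (Or.inl (by positivity))
  have hsq : HasDerivAt (fun y => y ^ 2 / 4) (x / 2) x :=
    ((hasDerivAt_pow 2 x).div_const 4).congr_deriv (by ring)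
  have hprod := hpow.mul ((hasDerivAt_besselIReduced hν _).comp x hsq)
  have heq : besselI ν =ᶠ[nhds x] fun y => (y / 2) ^ ν * besselIReduced ν (y ^ 2 / 4) :=
    (eventually_gt_nhds hx).mono fun y hy => besselI_eq_rpow_mul_besselIReduced ν hy
  refine (hprod.congr_of_eventuallyEq heq).congr_deriv ?_
  rw [rpow_sub_one (by positivity)]
  simp only [Function.comp_apply]
  field_simp

lemma deriv_besselI_div_besselI_div_sq (hν : 0 ≤ ν) (hx : 0 < x) :
    deriv (besselI ν) x / besselI ν x / x ^ 2 =
      ν / x ^ 3 + besselIReduced (ν + 1) (x ^ 2 / 4) / (2 * x * besselIReduced ν (x ^ 2 / 4)) := by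
  have hφ := besselIReduced_pos hν (by positivity : 0 ≤ x ^ 2 / 4)
  have hpow : 0 < (x / 2) ^ ν := by positivity
  rw [(hasDerivAt_besselI hν hx).deriv, besselI_eq_rpow_mul_besselIReduced ν hx]
  field_simp

end Bessel

noncomputable def besselIQuadratic (ν u : ℝ) : ℝ :=
  2 * u * besselIReduced (ν + 1) u ^ 2 +
    (2 * ν + 3) * besselIReduced ν u * besselIReduced (ν + 1) u - 2 * besselIReduced ν u ^ 2

section Quadratic

variable {ν : ℝ}

lemma hasDerivAt_rpow_mul_besselIQuadratic (hν : 0 ≤ ν) {v : ℝ} (hv : 0 < v) :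
    HasDerivAt (fun w => w ^ (ν + 3 / 2) * besselIQuadratic ν w)
      (v ^ (ν + 1 / 2) * (4 * v * besselIReduced (ν + 1) v ^ 2 +
        (ν + 3 / 2) * besselIReduced ν v * besselIReduced (ν + 1) v)) v := by
  have ha := hasDerivAt_besselIReduced hν v
  have hb := hasDerivAt_besselIReduced (ν := ν + 1) (by linarith) v
  rw [show ν + 1 + 1 = ν + 2 by ring] at hb
  have hrec := besselIReduced_recurrence hν v
  have hp := hasDerivAt_rpow_const (p := ν + 3 / 2) (Or.inl hv.ne')
  have hpow : v ^ (ν + 3 / 2) = v ^ (ν + 1 / 2) * v := by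
    rw [← rpow_add_one hv.ne']; ring_nf
  refine (hp.mul ((((hasDerivAt_id v).const_mul 2).mul (hb.pow 2)).add
    ((ha.const_mul (2 * ν + 3)).mul hb) |>.sub ((ha.pow 2).const_mul 2))).congr_deriv ?_
  rw [show ν + 3 / 2 - 1 = ν + 1 / 2 by ring, hpow]
  simp only [Pi.mul_apply, Pi.add_apply, Pi.sub_apply, Pi.pow_apply, id]
  linear_combination -(v ^ (ν + 1 / 2) * (4 * v * besselIReduced (ν + 1) v +
    (2 * ν + 3) * besselIReduced ν v)) * hrec

lemma besselIQuadratic_pos (hν : 0 ≤ ν) {u : ℝ} (hu : 0 < u) : 0 < besselIQuadratic ν u := by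
  have ha : Continuous (besselIReduced ν) :=
    continuous_iff_continuousAt.2 fun v => (hasDerivAt_besselIReduced hν v).continuousAt
  have hb : Continuous (besselIReduced (ν + 1)) :=
    continuous_iff_continuousAt.2 fun v => (hasDerivAt_besselIReduced (by linarith) v).continuousAt
  have hcont : Continuous fun w => w ^ (ν + 3 / 2) * besselIQuadratic ν w := by
    unfold besselIQuadratic
    exact (continuous_rpow_const (by linarith)).mul (by fun_prop)
  have hmono : StrictMonoOn (fun w => w ^ (ν + 3 / 2) * besselIQuadratic ν w) (Ici 0) := by
    refine strictMonoOn_of_deriv_pos (convex_Ici 0) hcont.continuousOn fun v hv => ?_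
    replace hv : 0 < v := by rwa [interior_Ici] at hv
    have := besselIReduced_pos hν hv.le
    have := besselIReduced_pos (ν := ν + 1) (by linarith) hv.le
    rw [(hasDerivAt_rpow_mul_besselIQuadratic hν hv).deriv]
    positivity
  have h : 0 ^ (ν + 3 / 2) * besselIQuadratic ν 0 < u ^ (ν + 3 / 2) * besselIQuadratic ν u :=
    hmono (mem_Ici.2 le_rfl) hu.le hu
  rw [zero_rpow (by linarith), zero_mul] at h
  exact pos_of_mul_pos_right h (rpow_nonneg hu.le _)

end Quadratic

section LogDeriv

variable {ν : ℝ}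

lemma hasDerivAt_besselI_logDeriv_div_sq (hν : 0 ≤ ν) {t : ℝ} (ht : 0 < t) :
    HasDerivAt (fun s => ν / s ^ 3 +
        besselIReduced (ν + 1) (s ^ 2 / 4) / (2 * s * besselIReduced ν (s ^ 2 / 4)))
      (-(3 * ν / t ^ 4) - besselIQuadratic ν (t ^ 2 / 4) /
        (2 * t ^ 2 * besselIReduced ν (t ^ 2 / 4) ^ 2)) t := by
  have hsq : HasDerivAt (fun s => s ^ 2 / 4) (t / 2) t :=
    ((hasDerivAt_pow 2 t).div_const 4).congr_deriv (by ring)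
  have ha := (hasDerivAt_besselIReduced hν _).comp t hsq
  have hb := (hasDerivAt_besselIReduced (ν := ν + 1) (by linarith) _).comp t hsq
  rw [show ν + 1 + 1 = ν + 2 by ring] at hb
  have hφ := besselIReduced_pos hν (by positivity : 0 ≤ t ^ 2 / 4)
  have hrec := besselIReduced_recurrence hν (t ^ 2 / 4)
  have hden : 2 * t * besselIReduced ν (t ^ 2 / 4) ≠ 0 := by positivity
  refine (((hasDerivAt_const t ν).div (hasDerivAt_pow 3 t) (by positivity)).add
    (hb.div (((hasDerivAt_id t).const_mul 2).mul ha) hden)).congr_deriv ?_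
  simp only [Pi.mul_apply, Function.comp_apply, id, besselIQuadratic]
  field_simp
  linear_combination (-16 * t ^ 4 * besselIReduced ν (t ^ 2 / 4)) * hrec

theorem strictAntiOn_deriv_besselI_div_besselI_div_sq (hν : 0 ≤ ν) :
    StrictAntiOn (fun t => deriv (besselI ν) t / besselI ν t / t ^ 2) (Ioi 0) := by
  refine StrictAntiOn.congr ?_ fun t ht => (deriv_besselI_div_besselI_div_sq hν ht).symm
  refine strictAntiOn_of_deriv_neg (convex_Ioi 0)
    (fun t ht => (hasDerivAt_besselI_logDeriv_div_sq hν ht).continuousAt.continuousWithinAt)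
    fun t ht => ?_
  replace ht : 0 < t := by rwa [interior_Ioi] at ht
  have hQ := besselIQuadratic_pos hν (by positivity : 0 < t ^ 2 / 4)
  have hφ := besselIReduced_pos hν (by positivity : 0 ≤ t ^ 2 / 4)
  rw [(hasDerivAt_besselI_logDeriv_div_sq hν ht).deriv]
  have : 0 ≤ 3 * ν / t ^ 4 := by positivity
  have : 0 < besselIQuadratic ν (t ^ 2 / 4) / (2 * t ^ 2 * besselIReduced ν (t ^ 2 / 4) ^ 2) := by
    positivity
  linarith

end LogDeriv

theorem sigma_map_strictMono_and_injective (ν r : ℝ) (hν : 0 ≤ ν) (hr : 0 < r) :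
    StrictMonoOn
      (fun σ : ℝ => σ * deriv (besselI ν) (r / Real.sqrt σ) / besselI ν (r / Real.sqrt σ))
      (Set.Ioi 0)
    ∧ ∀ σ₁ σ₂ : ℝ, 0 < σ₁ → 0 < σ₂ →
        σ₁ * deriv (besselI ν) (r / Real.sqrt σ₁) / besselI ν (r / Real.sqrt σ₁) =
          σ₂ * deriv (besselI ν) (r / Real.sqrt σ₂) / besselI ν (r / Real.sqrt σ₂) →
        σ₁ = σ₂ := by
  set G := fun t => deriv (besselI ν) t / besselI ν t / t ^ 2
  have hσ : ∀ σ : ℝ, 0 < σ →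
      σ * deriv (besselI ν) (r / √σ) / besselI ν (r / √σ) = r ^ 2 * G (r / √σ) := by
    intro σ hσ
    have hs := sqrt_pos.2 hσ
    simp only [G, div_pow, sq_sqrt hσ.le]
    field_simp
  have hmono : StrictMonoOn
      (fun σ : ℝ => σ * deriv (besselI ν) (r / √σ) / besselI ν (r / √σ)) (Ioi 0) := by
    intro σ₁ (h₁ : 0 < σ₁) σ₂ (h₂ : 0 < σ₂) hlt
    simp only [hσ σ₁ h₁, hσ σ₂ h₂]
    gcongr
    refine strictAntiOn_deriv_besselI_div_besselI_div_sq hν (by positivity : 0 < r / √σ₂)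
      (by positivity : 0 < r / √σ₁) ?_
    gcongr
  exact ⟨hmono, fun σ₁ σ₂ h₁ h₂ h => hmono.injOn h₁ h₂ h⟩
end
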